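/- arXiv:1307.6149 — 2 statements merged into one kernel-verified Lean document; each statement's English description precedes it below -/
import Mathlib

section
/- If F ∈ 𝓕 satisfies the class-J condition for n (i.e., lim_{K→∞} inf_{x≥0} P(X_{2,n} ≤ K | Sₙ > x) = 1), then it satisfies the class-J condition for n+1: lim_{K→∞} inf_{x≥0} P(X_{2,n+1} ≤ K | S_{n+1} > x) = 1. -/
/-!
If two of `X₁, …, X_{n+1}` exceed `K`, then, since `n + 1 ≥ 3`, they still do after deleting
some third coordinate `k`. Conditioning on `X_k` turns `{X_{2,n+1} > K, S_{n+1} > x}` into the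
`n`-sample event `{X_{2,n} > K, Sₙ > x - X_k}`, so a union bound over `k` gives
`P(X_{2,n+1} > K, S_{n+1} > x) ≤ (n + 1) δ P(S_{n+1} > x)` as soon as
`P(X_{2,n} > K, Sₙ > y) ≤ δ P(Sₙ > y)` for all `y ≥ 0`. Negative thresholds `x - X_k` reduce
to `y = 0` because the `Xᵢ` are nonnegative.
-/

open MeasureTheory Filter Set

/-- `P` under the law of `n` i.i.d. copies with common law `μ`. -/
noncomputable def piP (μ : Measure ℝ) (n : ℕ) (A : Set (Fin n → ℝ)) : ℝ :=
  ((Measure.pi fun _ : Fin n => μ) A).toReal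

/-- The event `Sₙ > x`. -/
def SumGt {n : ℕ} (x : ℝ) (v : Fin n → ℝ) : Prop := x < ∑ i, v i

/-- The event that the second largest of `v 0, …, v (n-1)` is `≤ K`. -/
def SecondLe {n : ℕ} (K : ℝ) (v : Fin n → ℝ) : Prop :=
  ∀ i j : Fin n, i ≠ j → v i ≤ K ∨ v j ≤ K

/-- Conditional probability `P(A | Sₙ > x)`. -/
noncomputable def condN (μ : Measure ℝ) (n : ℕ) (A : Set (Fin n → ℝ)) (x : ℝ) : ℝ :=
  piP μ n (A ∩ {v | SumGt x v}) / piP μ n {v | SumGt x v}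

open scoped ENNReal Topology

lemma Filter.tendsto_iInf_nhds_one_iff {β ι : Type*} [Nonempty ι] {l : Filter β}
    {f : β → ι → ℝ} (h0 : ∀ b i, 0 ≤ f b i) (h1 : ∀ b i, f b i ≤ 1) :
    Tendsto (fun b => ⨅ i, f b i) l (𝓝 1) ↔ ∀ ε > 0, ∀ᶠ b in l, ∀ i, 1 - ε ≤ f b i := by
  have hbdd : ∀ b, BddBelow (range (f b)) := fun b => ⟨0, forall_mem_range.2 (h0 b)⟩
  have hle : ∀ b, ⨅ i, f b i ≤ 1 := fun b =>
    (ciInf_le (hbdd b) (Classical.arbitrary ι)).trans (h1 b _)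
  constructor
  · intro h ε hε
    filter_upwards [h.eventually (eventually_gt_nhds (sub_lt_self 1 hε))] with b hb i
    exact hb.le.trans (ciInf_le (hbdd b) i)
  · intro h
    refine tendsto_order.2 ⟨fun a ha => ?_, fun a ha => .of_forall fun b => (hle b).trans_lt ha⟩
    filter_upwards [h ((1 - a) / 2) (by linarith)] with b hb
    linarith [le_ciInf hb]

lemma one_sub_le_measureReal_div_iff {α : Type*} [MeasurableSpace α] {ν : Measure α}
    [IsFiniteMeasure ν] {A B : Set α} (hA : MeasurableSet A) (hB : ν B ≠ 0) {δ : ℝ}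
    (hδ : 0 ≤ δ) :
    1 - δ ≤ ν.real (A ∩ B) / ν.real B ↔ ν (Aᶜ ∩ B) ≤ ENNReal.ofReal δ * ν B := by
  have hsplit : ν.real (A ∩ B) + ν.real (Aᶜ ∩ B) = ν.real B := by
    have := measureReal_inter_add_sdiff (μ := ν) (s := B) hA
    rwa [Set.sdiff_eq, inter_comm B, inter_comm B] at this
  have hpos : 0 < ν.real B := ENNReal.toReal_pos hB (measure_ne_top ν B)
  rw [le_div_iff₀ hpos, ← ofReal_measureReal, ← ofReal_measureReal,
    ← ENNReal.ofReal_mul hδ, ENNReal.ofReal_le_ofReal_iff (by positivity)]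
  constructor <;> intro h <;> linarith

lemma condN_nonneg (μ : Measure ℝ) (n : ℕ) (A : Set (Fin n → ℝ)) (x : ℝ) :
    0 ≤ condN μ n A x :=
  div_nonneg ENNReal.toReal_nonneg ENNReal.toReal_nonneg

lemma condN_le_one (μ : Measure ℝ) [IsProbabilityMeasure μ] (n : ℕ) (A : Set (Fin n → ℝ))
    (x : ℝ) : condN μ n A x ≤ 1 :=
  div_le_one_of_le₀ (measureReal_mono inter_subset_right) measureReal_nonneg

lemma measurableSet_secondLe {n : ℕ} (K : ℝ) :
    MeasurableSet {v : Fin n → ℝ | SecondLe K v} := by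
  simp only [SecondLe, ofPred_forall]
  exact .iInter fun i => .iInter fun j => .iInter fun _ =>
    (measurableSet_le (measurable_pi_apply i) measurable_const).union
      (measurableSet_le (measurable_pi_apply j) measurable_const)

lemma not_secondLe_iff {n : ℕ} {K : ℝ} {v : Fin n → ℝ} :
    ¬ SecondLe K v ↔ ∃ i j, i ≠ j ∧ K < v i ∧ K < v j := by
  simp [SecondLe]

lemma exists_not_secondLe_removeNth {n : ℕ} (hn : 2 ≤ n) {K : ℝ} {v : Fin (n + 1) → ℝ}
    (hv : ¬ SecondLe K v) : ∃ k : Fin (n + 1), ¬ SecondLe K (k.removeNth v) := by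
  obtain ⟨i, j, hij, hi, hj⟩ := not_secondLe_iff.1 hv
  obtain ⟨k, -, hk⟩ := Finset.exists_mem_notMem_of_card_lt_card (s := {i, j})
    (t := Finset.univ) ((Finset.card_le_two).trans_lt (by simp; omega))
  simp only [Finset.mem_insert, Finset.mem_singleton, not_or] at hk
  obtain ⟨i', rfl⟩ := Fin.exists_succAbove_eq (Ne.symm hk.1)
  obtain ⟨j', rfl⟩ := Fin.exists_succAbove_eq (Ne.symm hk.2)
  exact ⟨k, not_secondLe_iff.2 ⟨i', j', fun h => hij (h ▸ rfl), hi, hj⟩⟩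

lemma sumGt_iff_removeNth {n : ℕ} (k : Fin (n + 1)) (x : ℝ) (v : Fin (n + 1) → ℝ) :
    SumGt x v ↔ SumGt (x - v k) (k.removeNth v) := by
  simp only [SumGt, Fin.sum_univ_succAbove v k, Fin.removeNth, sub_lt_iff_lt_add']

lemma sumGt_of_not_secondLe {n : ℕ} {K : ℝ} (hK : 0 ≤ K) {v : Fin n → ℝ} (hv : 0 ≤ v)
    (h : ¬ SecondLe K v) : SumGt 0 v := by
  obtain ⟨i, -, -, hi, -⟩ := not_secondLe_iff.1 h
  exact (hK.trans_lt hi).trans_le (Finset.single_le_sum (fun j _ => hv j) (Finset.mem_univ i))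

section IIDSample

variable (μ : Measure ℝ)

local notation "P" n => Measure.pi fun _ : Fin n => μ

lemma ae_nonneg_pi [SigmaFinite μ] (hnn : μ (Iio 0) = 0) (n : ℕ) : ∀ᵐ v ∂(P n), 0 ≤ v :=
  ae_all_iff.2 fun _ => Measure.tendsto_eval_ae_ae.eventually
    (measure_eq_zero_iff_ae_notMem.1 hnn |>.mono fun _ h => not_lt.1 h)

lemma pi_sumGt_pos [IsProbabilityMeasure μ] (hub : ∀ x, 0 < μ (Ioi x)) {n : ℕ} (hn : 0 < n)
    (x : ℝ) : 0 < (P n) {v | SumGt x v} := by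
  have hsub : univ.pi (fun _ : Fin n => Ioi (x / n)) ⊆ {v | SumGt x v} := fun v hv => by
    calc x = ∑ _i : Fin n, x / n := by
          rw [Finset.sum_const, Finset.card_univ, Fintype.card_fin, nsmul_eq_mul]
          field_simp
      _ < ∑ i, v i := Finset.sum_lt_sum_of_nonempty ⟨⟨0, hn⟩, Finset.mem_univ _⟩
          fun i _ => hv i (mem_univ i)
  refine (measure_mono hsub).trans_lt' ?_
  rw [Measure.pi_pi]
  exact CanonicallyOrderedAdd.prod_pos.2 fun _ _ => hub _

lemma one_sub_le_condN_iff [IsProbabilityMeasure μ] (hub : ∀ x, 0 < μ (Ioi x)) {n : ℕ}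
    (hn : 0 < n) {A : Set (Fin n → ℝ)} (hA : MeasurableSet A) (x : ℝ) {δ : ℝ}
    (hδ : 0 ≤ δ) :
    1 - δ ≤ condN μ n A x ↔
      (P n) (Aᶜ ∩ {v | SumGt x v}) ≤ ENNReal.ofReal δ * (P n) {v | SumGt x v} :=
  one_sub_le_measureReal_div_iff hA (pi_sumGt_pos μ hub hn x).ne' hδ

lemma pi_succ_removeNth_inter_sumGt [SigmaFinite μ] {n : ℕ} (k : Fin (n + 1))
    {A : Set (Fin n → ℝ)} (hA : MeasurableSet A) (x : ℝ) :
    (P (n + 1)) ({v | (k.removeNth v : Fin n → ℝ) ∈ A} ∩ {v | SumGt x v}) =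
      ∫⁻ y, (P n) (A ∩ {w | SumGt (x - y) w}) ∂μ := by
  set D : Set (ℝ × (Fin n → ℝ)) := {p | p.2 ∈ A ∧ SumGt (x - p.1) p.2}
  have hD : MeasurableSet D :=
    (measurable_snd hA).inter (measurableSet_lt (f := fun p : ℝ × (Fin n → ℝ) => x - p.1)
      (g := fun p => ∑ i, p.2 i) (by fun_prop) (by fun_prop))
  have hpre : {v | (k.removeNth v : Fin n → ℝ) ∈ A} ∩ {v | SumGt x v} =
      MeasurableEquiv.piFinSuccAbove (fun _ => ℝ) k ⁻¹' D := by
    ext v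
    simp [D, sumGt_iff_removeNth k x v]
  rw [hpre, (measurePreserving_piFinSuccAbove (fun _ => μ) k).measure_preimage
    hD.nullMeasurableSet, Measure.prod_apply hD]
  rfl

lemma pi_sumGt_eq_lintegral [SigmaFinite μ] {n : ℕ} (x : ℝ) :
    (P (n + 1)) {v | SumGt x v} = ∫⁻ y, (P n) {w | SumGt (x - y) w} ∂μ := by
  simpa using pi_succ_removeNth_inter_sumGt μ 0 MeasurableSet.univ x

lemma pi_not_secondLe_inter_sumGt_le [SigmaFinite μ] (hnn : μ (Iio 0) = 0) {n : ℕ} {K : ℝ}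
    (hK : 0 ≤ K) {c : ℝ≥0∞}
    (h : ∀ y, 0 ≤ y →
      (P n) ({v | SecondLe K v}ᶜ ∩ {v | SumGt y v}) ≤ c * (P n) {v | SumGt y v})
    (y : ℝ) :
    (P n) ({v | SecondLe K v}ᶜ ∩ {v | SumGt y v}) ≤ c * (P n) {v | SumGt y v} := by
  rcases le_or_gt 0 y with hy | hy
  · exact h y hy
  calc (P n) ({v | SecondLe K v}ᶜ ∩ {v | SumGt y v})
      ≤ (P n) ({v | SecondLe K v}ᶜ ∩ {v | SumGt 0 v}) := by
        refine measure_mono_ae ?_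
        filter_upwards [ae_nonneg_pi μ hnn n] with v hv hmem
        exact ⟨hmem.1, sumGt_of_not_secondLe hK hv hmem.1⟩
    _ ≤ c * (P n) {v | SumGt 0 v} := h 0 le_rfl
    _ ≤ c * (P n) {v | SumGt y v} := by
        gcongr
        exact hy.trans

lemma pi_succ_not_secondLe_inter_sumGt_le [SigmaFinite μ] (hnn : μ (Iio 0) = 0) {n : ℕ}
    (hn : 2 ≤ n) {K : ℝ} (hK : 0 ≤ K) {c : ℝ≥0∞}
    (h : ∀ y, 0 ≤ y →
      (P n) ({v | SecondLe K v}ᶜ ∩ {v | SumGt y v}) ≤ c * (P n) {v | SumGt y v})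
    (x : ℝ) :
    (P (n + 1)) ({v | SecondLe K v}ᶜ ∩ {v | SumGt x v}) ≤
      (n + 1) * c * (P (n + 1)) {v | SumGt x v} := by
  have hcover : {v : Fin (n + 1) → ℝ | SecondLe K v}ᶜ ∩ {v | SumGt x v} ⊆
      ⋃ k : Fin (n + 1),
        {v | (k.removeNth v : Fin n → ℝ) ∈ {w | SecondLe K w}ᶜ} ∩ {v | SumGt x v} := by
    rintro v ⟨hv, hx⟩
    obtain ⟨k, hk⟩ := exists_not_secondLe_removeNth hn hv
    exact mem_iUnion.2 ⟨k, hk, hx⟩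
  have hmono : Monotone fun y => (P n) {w | SumGt (x - y) w} :=
    fun y y' hyy' => measure_mono fun w (hw : x - y < _) => show x - y' < _ by linarith
  calc (P (n + 1)) ({v | SecondLe K v}ᶜ ∩ {v | SumGt x v})
      ≤ ∑ k : Fin (n + 1), (P (n + 1))
          ({v | (k.removeNth v : Fin n → ℝ) ∈ {w | SecondLe K w}ᶜ} ∩ {v | SumGt x v}) :=
        (measure_mono hcover).trans (measure_iUnion_fintype_le _ _)
    _ = ∑ _k : Fin (n + 1),
          ∫⁻ y, (P n) ({w | SecondLe K w}ᶜ ∩ {w | SumGt (x - y) w}) ∂μ := by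
        simp_rw [pi_succ_removeNth_inter_sumGt μ _ (measurableSet_secondLe K).compl]
    _ ≤ ∑ _k : Fin (n + 1), ∫⁻ y, c * (P n) {w | SumGt (x - y) w} ∂μ := by
        gcongr with k y
        exact pi_not_secondLe_inter_sumGt_le μ hnn hK h (x - y)
    _ = (n + 1) * c * (P (n + 1)) {v | SumGt x v} := by
        rw [lintegral_const_mul c hmono.measurable, ← pi_sumGt_eq_lintegral]
        simp [mul_assoc]

end IIDSample

theorem stmt4 (μ : Measure ℝ) [IsProbabilityMeasure μ]
    (hnn : μ (Set.Iio 0) = 0) (hub : ∀ x : ℝ, 0 < μ (Set.Ioi x))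
    (n : ℕ) (hn : 2 ≤ n)
    (h : Tendsto (fun K : ℝ =>
        ⨅ x : Set.Ici (0:ℝ), condN μ n {v | SecondLe K v} (x : ℝ)) atTop (nhds 1)) :
    Tendsto (fun K : ℝ =>
        ⨅ x : Set.Ici (0:ℝ), condN μ (n + 1) {v | SecondLe K v} (x : ℝ)) atTop (nhds 1) := by
  rw [tendsto_iInf_nhds_one_iff (fun _ _ => condN_nonneg ..) (fun _ _ => condN_le_one ..)]
    at h ⊢
  intro ε hε
  have hδ : 0 ≤ ε / (n + 1) := by positivity
  filter_upwards [h (ε / (n + 1)) (by positivity), eventually_ge_atTop 0] with K hK hK0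
  rintro ⟨x, -⟩
  have hKn := fun (y : ℝ) (hy : 0 ≤ y) =>
    (one_sub_le_condN_iff μ hub (by omega) (measurableSet_secondLe K) y hδ).1 (hK ⟨y, hy⟩)
  rw [one_sub_le_condN_iff μ hub (by omega) (measurableSet_secondLe K) x hε.le]
  calc _ ≤ (n + 1) * ENNReal.ofReal (ε / (n + 1)) * _ :=
        pi_succ_not_secondLe_inter_sumGt_le μ hnn hn hK0 hKn x
    _ = ENNReal.ofReal ε * _ := by
        rw [← ENNReal.ofReal_natCast, ← ENNReal.ofReal_one,
          ← ENNReal.ofReal_add (by positivity) zero_le_one,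
          ← ENNReal.ofReal_mul (by positivity), mul_div_cancel₀ _ (by positivity)]
end

section
/- Every distribution with dominatedly varying tail belongs to the class 𝓙: if limsup_{x→∞} F̄(x/2)/F̄(x) < ∞, then for i.i.d. X₁, X₂ ∼ F one has lim_{K→∞} liminf_{x→∞} P(max(X₁,X₂) > x−K | X₁+X₂ > x) = 1. -/
open MeasureTheory Filter Set

/-- Tail of a distribution: `F̄(x) = μ(x, ∞)`. -/
noncomputable def tail (μ : Measure ℝ) (x : ℝ) : ℝ := (μ (Set.Ioi x)).toReal

/-- Conditional probability `P(A | X₁ + X₂ > x)` for two i.i.d. variables with law `μ`. -/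
noncomputable def condPair (μ : Measure ℝ) (A : Set (ℝ × ℝ)) (x : ℝ) : ℝ :=
  ((μ.prod μ) (A ∩ {p | x < p.1 + p.2})).toReal / ((μ.prod μ) {p | x < p.1 + p.2}).toReal

/-- The class 𝓙 : `lim_{K→∞} liminf_{x→∞} P(max(X₁,X₂) > x − K | X₁ + X₂ > x) = 1`. -/
def MemJ (μ : Measure ℝ) : Prop :=
  Tendsto (fun K : ℝ =>
      liminf (fun x : ℝ => condPair μ {p | x - K < max p.1 p.2} x) atTop)
    atTop (nhds 1)

/-- The class 𝓙 (equivalent form): for every nonnegative, unbounded, nondecreasing `g`,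
`lim_{x→∞} P(min(X₁,X₂) > g(x) | X₁ + X₂ > x) = 0`. -/
def MemJg (μ : Measure ℝ) : Prop :=
  ∀ g : ℝ → ℝ, (∀ x, 0 ≤ g x) → Monotone g → (∀ M, ∃ x, M < g x) →
    Tendsto (fun x : ℝ => condPair μ {p | g x < min p.1 p.2} x) atTop (nhds 0)

/-- Tail of the two-fold convolution: `F̄²*(x) = P(X₁ + X₂ > x)`. -/
noncomputable def tail2 (μ : Measure ℝ) (x : ℝ) : ℝ := ((μ.prod μ) {p | x < p.1 + p.2}).toReal

/-- Weak asymptotic tail-equivalence `F̄ ≍ Ḡ`: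
`0 < liminf F̄(x)/Ḡ(x) ≤ limsup F̄(x)/Ḡ(x) < ∞`. -/
def WeakTailEquiv (μ ν : Measure ℝ) : Prop :=
  (∃ c : ℝ, 0 < c ∧ ∀ᶠ x in atTop, c * tail ν x ≤ tail μ x) ∧
  (∃ C : ℝ, ∀ᶠ x in atTop, tail μ x ≤ C * tail ν x)

/-- Convolution of two laws on ℝ. -/
noncomputable def conv (μ ν : Measure ℝ) : Measure ℝ :=
  Measure.map (fun p : ℝ × ℝ => p.1 + p.2) (μ.prod ν)

/-- `n`-fold convolution `F^{n*}`. -/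
noncomputable def nconv (μ : Measure ℝ) : ℕ → Measure ℝ
  | 0 => Measure.dirac 0
  | n + 1 => conv (nconv μ n) μ

/-!
If `X₁ + X₂ > x` but `max(X₁, X₂) ≤ x − K`, then both summands exceed `K` and one of them
exceeds `x / 2`. Hence `P(X₁ + X₂ > x, max(X₁, X₂) ≤ x − K) ≤ 2 F̄(x/2) F̄(K) ≤ 2 C F̄(x) F̄(K)`,
and since `P(X₁ + X₂ > x) ≥ F̄(x)` for nonnegative summands, the conditional probability of
`max(X₁, X₂) > x − K` is at least `1 − 2 C F̄(K)`, which tends to `1` as `K → ∞`.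
-/

open Topology

lemma tail_nonneg (μ : Measure ℝ) (x : ℝ) : 0 ≤ tail μ x := ENNReal.toReal_nonneg

lemma tendsto_tail_atTop (μ : Measure ℝ) [IsFiniteMeasure μ] :
    Tendsto (tail μ) atTop (𝓝 0) := by
  have hempty : ⋂ x : ℝ, Ioi x = ∅ := iInter_eq_empty_iff.2 fun y => ⟨y, lt_irrefl y⟩
  have h := tendsto_measure_iInter_atTop (μ := μ) (fun x => measurableSet_Ioi.nullMeasurableSet)
    (fun _ _ hab => Ioi_subset_Ioi hab) ⟨0, measure_ne_top μ _⟩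
  rw [hempty, measure_empty] at h
  have h' := (ENNReal.tendsto_toReal ENNReal.zero_ne_top).comp h
  rw [ENNReal.toReal_zero] at h'
  exact h'

lemma condPair_eq (μ : Measure ℝ) (A : Set (ℝ × ℝ)) (x : ℝ) :
    condPair μ A x = ((μ.prod μ) (A ∩ {p | x < p.1 + p.2})).toReal / tail2 μ x := rfl

lemma condPair_nonneg (μ : Measure ℝ) (A : Set (ℝ × ℝ)) (x : ℝ) : 0 ≤ condPair μ A x :=
  div_nonneg ENNReal.toReal_nonneg ENNReal.toReal_nonneg

lemma condPair_le_one (μ : Measure ℝ) [IsFiniteMeasure μ] (A : Set (ℝ × ℝ)) (x : ℝ) :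
    condPair μ A x ≤ 1 :=
  div_le_one_of_le₀ (ENNReal.toReal_mono (measure_ne_top _ _) (measure_mono inter_subset_right))
    ENNReal.toReal_nonneg

section Nonneg

variable (μ : Measure ℝ) [IsProbabilityMeasure μ]

lemma measure_Ioi_le_prod_sum_gt (hnn : μ (Iio 0) = 0) (x : ℝ) :
    μ (Ioi x) ≤ (μ.prod μ) {p : ℝ × ℝ | x < p.1 + p.2} := by
  have hIci : μ (Ici 0) = 1 := by
    rw [← compl_Iio, prob_compl_eq_one_sub measurableSet_Iio, hnn, tsub_zero]
  calc μ (Ioi x) = (μ.prod μ) (Ioi x ×ˢ Ici 0) := by rw [Measure.prod_prod, hIci, mul_one]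
    _ ≤ _ := measure_mono fun p ⟨h1, (h2 : 0 ≤ p.2)⟩ => lt_add_of_lt_of_nonneg h1 h2

lemma tail_le_tail2 (hnn : μ (Iio 0) = 0) (x : ℝ) : tail μ x ≤ tail2 μ x :=
  ENNReal.toReal_mono (measure_ne_top _ _) (measure_Ioi_le_prod_sum_gt μ hnn x)

lemma tail2_pos (hnn : μ (Iio 0) = 0) (hub : ∀ x : ℝ, 0 < μ (Ioi x)) (x : ℝ) :
    0 < tail2 μ x :=
  ENNReal.toReal_pos ((hub x).trans_le (measure_Ioi_le_prod_sum_gt μ hnn x)).ne'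
    (measure_ne_top _ _)

end Nonneg

lemma sum_gt_subset_max_gt_union (x K : ℝ) :
    {p : ℝ × ℝ | x < p.1 + p.2} ⊆
      {p | x - K < max p.1 p.2} ∪ (Ioi (x / 2) ×ˢ Ioi K ∪ Ioi K ×ˢ Ioi (x / 2)) := by
  rintro ⟨a, b⟩ (hab : x < a + b)
  by_cases hmax : x - K < max a b
  · exact Or.inl hmax
  · have ha : a ≤ x - K := (le_max_left a b).trans (not_lt.1 hmax)
    have hb : b ≤ x - K := (le_max_right a b).trans (not_lt.1 hmax)
    rcases lt_or_ge (x / 2) a with h | h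
    · exact Or.inr (Or.inl ⟨h, show K < b by linarith⟩)
    · exact Or.inr (Or.inr ⟨show K < a by linarith, show x / 2 < b by linarith⟩)

lemma tail2_le_max_gt_add (μ : Measure ℝ) [IsFiniteMeasure μ] (x K : ℝ) :
    tail2 μ x ≤ ((μ.prod μ) ({p | x - K < max p.1 p.2} ∩ {p | x < p.1 + p.2})).toReal
      + 2 * tail μ (x / 2) * tail μ K := by
  set S : Set (ℝ × ℝ) := {p | x < p.1 + p.2}
  set A : Set (ℝ × ℝ) := {p | x - K < max p.1 p.2}
  have hsub : S ⊆ A ∩ S ∪ (Ioi (x / 2) ×ˢ Ioi K ∪ Ioi K ×ˢ Ioi (x / 2)) := fun p hp =>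
    (sum_gt_subset_max_gt_union x K hp).imp_left fun h => ⟨h, hp⟩
  have h : (μ.prod μ) S ≤ (μ.prod μ) (A ∩ S)
      + ((μ.prod μ) (Ioi (x / 2) ×ˢ Ioi K) + (μ.prod μ) (Ioi K ×ˢ Ioi (x / 2))) :=
    (measure_mono hsub).trans <| (measure_union_le _ _).trans <|
      add_le_add le_rfl (measure_union_le _ _)
  have h' := ENNReal.toReal_mono (by finiteness) h
  rw [ENNReal.toReal_add (by finiteness) (by finiteness),
    ENNReal.toReal_add (by finiteness) (by finiteness),
    Measure.prod_prod, Measure.prod_prod, ENNReal.toReal_mul, ENNReal.toReal_mul] at h'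
  unfold tail2 tail
  linarith

lemma one_sub_le_condPair_max_gt (μ : Measure ℝ) [IsProbabilityMeasure μ]
    (hnn : μ (Iio 0) = 0) (hub : ∀ x : ℝ, 0 < μ (Ioi x)) {C x K : ℝ} (hC : 0 ≤ C)
    (hx : tail μ (x / 2) ≤ C * tail μ x) :
    1 - 2 * C * tail μ K ≤ condPair μ {p | x - K < max p.1 p.2} x := by
  have hsplit := tail2_le_max_gt_add μ x K
  rw [condPair_eq, le_div_iff₀ (tail2_pos μ hnn hub x)]
  nlinarith [mul_nonneg (mul_nonneg hC (tail_nonneg μ K)) (sub_nonneg.2 (tail_le_tail2 μ hnn x)),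
    mul_nonneg (tail_nonneg μ K) (sub_nonneg.2 hx)]

lemma memJ_of_eventually_le_condPair (μ : Measure ℝ) [IsFiniteMeasure μ] {g : ℝ → ℝ}
    (hg : Tendsto g atTop (𝓝 1))
    (hle : ∀ K, ∀ᶠ x in atTop, g K ≤ condPair μ {p | x - K < max p.1 p.2} x) :
    MemJ μ := by
  refine tendsto_of_tendsto_of_tendsto_of_le_of_le hg tendsto_const_nhds (fun K => ?_) fun K => ?_
  · exact le_liminf_of_le
      (isBoundedUnder_of ⟨1, fun x => condPair_le_one μ _ x⟩).isCoboundedUnder_ge (hle K)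
  · exact liminf_le_of_le (isBoundedUnder_of ⟨0, fun x => condPair_nonneg μ _ x⟩)
      fun b hb => hb.exists.elim fun x hx => hx.trans (condPair_le_one μ _ x)

theorem stmt8 (μ : Measure ℝ) [IsProbabilityMeasure μ]
    (hnn : μ (Set.Iio 0) = 0) (hub : ∀ x : ℝ, 0 < μ (Set.Ioi x))
    (hD : ∃ C : ℝ, ∀ᶠ x in atTop, tail μ (x / 2) ≤ C * tail μ x) :
    MemJ μ := by
  obtain ⟨C, hC⟩ := hD
  have hC' : ∀ᶠ x in atTop, tail μ (x / 2) ≤ max C 0 * tail μ x := hC.mono fun x hx =>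
    hx.trans (mul_le_mul_of_nonneg_right (le_max_left _ _) (tail_nonneg μ x))
  refine memJ_of_eventually_le_condPair μ (g := fun K => 1 - 2 * max C 0 * tail μ K)
    (by simpa using ((tendsto_tail_atTop μ).const_mul (2 * max C 0)).const_sub 1) fun K => ?_
  filter_upwards [hC'] with x hx
  exact one_sub_le_condPair_max_gt μ hnn hub (le_max_right C 0) hx
end
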